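/- arXiv:1009.3678 — 2 statements merged into one kernel-verified Lean document; each statement's English description precedes it below -/
import Mathlib

section
/- For all nonnegative integers n, j and every positive integer a: if a does not divide n then V_a* S^n S^j S^{*j} V_a = 0, and if a divides n then V_a* S^n S^j S^{*j} V_a = S^{n/a} S^i S^{*i}, where i = ⌈j/a⌉ is the unique nonnegative integer with a(i−1) < j ≤ ai (and i = 0 when j = 0). -/
open ContinuousLinearMap

set_option linter.unusedSectionVars false

section aux
variable {H : Type*} [NormedAddCommGroup H] [InnerProductSpace ℂ H] [CompleteSpace H]
  (e : HilbertBasis ℕ ℂ H)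

lemma clm_ext {f g : H →L[ℂ] H} (h : ∀ m, f (e m) = g (e m)) : f = g := by
  refine ContinuousLinearMap.ext_on
    (Submodule.dense_iff_topologicalClosure_eq_top.mpr e.dense_span) ?_
  rintro _ ⟨m, rfl⟩; exact h m

lemma vec_ext {x y : H} (h : ∀ m, (inner ℂ (e m) x : ℂ) = inner ℂ (e m) y) : x = y := by
  apply e.repr.injective
  apply lp.ext
  funext m
  rw [e.repr_apply_apply, e.repr_apply_apply]
  exact h m

lemma inner_ee (k m : ℕ) : (inner ℂ (e k) (e m) : ℂ) = if k = m then 1 else 0 :=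
  orthonormal_iff_ite.mp e.orthonormal k m

variable (S : H →L[ℂ] H) (hS : ∀ n, S (e n) = e (n + 1))

include hS in
lemma Spow (j m : ℕ) : (S ^ j) (e m) = e (m + j) := by
  induction j with
  | zero => simp
  | succ j ih => rw [pow_succ', mul_apply_eq_comp, ih, hS]; exact congrArg e (by omega)

include hS in
lemma Sadj (k : ℕ) : (adjoint S) (e k) = if k = 0 then 0 else e (k - 1) := by
  apply vec_ext e
  intro m
  rw [adjoint_inner_right, hS, inner_ee]
  match k with
  | 0 => simp
  | k + 1 =>
    rw [if_neg (Nat.succ_ne_zero k), inner_ee, Nat.add_sub_cancel]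
    by_cases h : m = k
    · simp [h]
    · rw [if_neg h, if_neg (by omega)]

include hS in
lemma SadjPow (j k : ℕ) : ((adjoint S) ^ j) (e k) = if j ≤ k then e (k - j) else 0 := by
  induction j generalizing k with
  | zero => simp
  | succ j ih =>
    rw [pow_succ, mul_apply_eq_comp, Sadj e S hS]
    match k with
    | 0 => simp
    | k + 1 =>
      rw [if_neg (Nat.succ_ne_zero k), Nat.add_sub_cancel, ih]
      by_cases h : j ≤ k
      · rw [if_pos h, if_pos (by omega)]
        exact congrArg e (by omega)
      · rw [if_neg h, if_neg (by omega)]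

include hS in
lemma SSadjPow (j k : ℕ) : ((S ^ j) * (adjoint S) ^ j) (e k) = if j ≤ k then e k else 0 := by
  rw [mul_apply_eq_comp, SadjPow e S hS]
  by_cases h : j ≤ k
  · rw [if_pos h, if_pos h, Spow e S hS]
    exact congrArg e (by omega)
  · rw [if_neg h, if_neg h, map_zero]

variable (a : ℕ) (ha : 0 < a) (V : H →L[ℂ] H) (hV : ∀ n, V (e n) = e (a * n))

include hV ha in
lemma Vadj (k : ℕ) : (adjoint V) (e k) = if a ∣ k then e (k / a) else 0 := by
  apply vec_ext e
  intro m
  rw [adjoint_inner_right, hV, inner_ee]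
  by_cases hd : a ∣ k
  · rw [if_pos hd, inner_ee]
    obtain ⟨c, rfl⟩ := hd
    rw [Nat.mul_div_cancel_left c ha]
    by_cases h : m = c
    · simp [h]
    · rw [if_neg (by intro hh; exact h (Nat.eq_of_mul_eq_mul_left ha hh)), if_neg h]
  · rw [if_neg hd, inner_zero_right, if_neg (fun h => hd ⟨m, h.symm⟩)]
end aux

/-- On `ℓ²(ℕ)` (abstractly: a Hilbert space with Hilbert basis `(e_n)`),
with `S` the unilateral shift (`S e_n = e_{n+1}`) and `V = V_a` determined by `V e_n = e_{an}`:
if `a ∤ n` then `V* S^n S^j S^{*j} V = 0`, and if `a ∣ n` then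
`V* S^n S^j S^{*j} V = S^{n/a} S^i S^{*i}` where `i` is the unique nonnegative integer with
`a(i-1) < j ≤ ai` (and `i = 0` when `j = 0`). -/
theorem stmt11 {H : Type*} [NormedAddCommGroup H] [InnerProductSpace ℂ H] [CompleteSpace H]
    (e : HilbertBasis ℕ ℂ H) (S : H →L[ℂ] H) (hS : ∀ n, S (e n) = e (n + 1))
    (a : ℕ) (ha : 0 < a) (V : H →L[ℂ] H) (hV : ∀ n, V (e n) = e (a * n))
    (n j : ℕ) :
    (¬ a ∣ n → adjoint V * (S ^ n * (S ^ j * (adjoint S) ^ j)) * V = 0) ∧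
    (a ∣ n → ∀ i : ℕ, ((j = 0 ∧ i = 0) ∨ (1 ≤ i ∧ a * (i - 1) < j ∧ j ≤ a * i)) →
      adjoint V * (S ^ n * (S ^ j * (adjoint S) ^ j)) * V
        = S ^ (n / a) * (S ^ i * (adjoint S) ^ i)) := by
  constructor
  · intro hnd
    apply clm_ext e
    intro m
    rw [mul_apply_eq_comp, mul_apply_eq_comp, mul_apply_eq_comp, hV, SSadjPow e S hS]
    by_cases h : j ≤ a * m
    · rw [if_pos h, Spow e S hS, Vadj e a ha V hV,
        if_neg (fun hd => hnd ((Nat.dvd_add_right ⟨m, by ring⟩).mp hd))]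
      simp
    · rw [if_neg h]
      simp
  · rintro ⟨c, rfl⟩ i hi
    apply clm_ext e
    intro m
    rw [mul_apply_eq_comp, mul_apply_eq_comp, mul_apply_eq_comp, hV, SSadjPow e S hS, mul_apply_eq_comp,
      SSadjPow e S hS]
    have key : j ≤ a * m ↔ i ≤ m := by
      rcases hi with ⟨rfl, rfl⟩ | ⟨h1, h2, h3⟩
      · simp
      · constructor
        · intro h
          by_contra hm
          have : a * m ≤ a * (i - 1) := Nat.mul_le_mul_left a (by omega)
          omega
        · intro h
          exact h3.trans (Nat.mul_le_mul_left a h)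
    by_cases h : i ≤ m
    · rw [if_pos (key.mpr h), if_pos h, Spow e S hS, Spow e S hS,
        Vadj e a ha V hV, if_pos ⟨m + c, by ring⟩, Nat.mul_div_cancel_left c ha]
      exact congrArg e (by rw [show a * m + a * c = a * (m + c) by ring, Nat.mul_div_cancel_left _ ha])
    · rw [if_neg (fun hh => h (key.mp hh)), if_neg h]
      simp
end

section
/- Let a be a positive integer, let n, j be nonnegative integers, and let k be the smallest nonnegative integer such that a divides n+k. If j ≤ k, then S^jS^{*j}S^{*n}V_a = S^kS^{*k}S^{*n}V_a as operators on ℓ²(ℕ). -/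
open ContinuousLinearMap

open scoped InnerProductSpace in
private lemma vec_ext_s15 {H : Type*} [NormedAddCommGroup H] [InnerProductSpace ℂ H]
    [CompleteSpace H] (e : HilbertBasis ℕ ℂ H) {x y : H}
    (h : ∀ i, ⟪e i, x⟫_ℂ = ⟪e i, y⟫_ℂ) : x = y := by
  apply e.repr.injective
  ext i
  simpa [e.repr_apply_apply] using h i

open scoped InnerProductSpace in
private lemma adjS {H : Type*} [NormedAddCommGroup H] [InnerProductSpace ℂ H]
    [CompleteSpace H] (e : HilbertBasis ℕ ℂ H) (S : H →L[ℂ] H)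
    (hS : ∀ n, S (e n) = e (n + 1)) (m : ℕ) :
    adjoint S (e m) = if m = 0 then 0 else e (m - 1) := by
  apply vec_ext_s15 e
  intro i
  rw [adjoint_inner_right, hS]
  have horth := orthonormal_iff_ite.mp e.orthonormal
  rcases Nat.eq_zero_or_pos m with hm | hm
  · simp [hm, horth, Nat.succ_ne_zero]
  · rw [if_neg hm.ne', horth, horth]
    have : i + 1 = m ↔ i = m - 1 := by omega
    simp [this]

private lemma adjS_pow {H : Type*} [NormedAddCommGroup H] [InnerProductSpace ℂ H]
    [CompleteSpace H] (e : HilbertBasis ℕ ℂ H) (S : H →L[ℂ] H)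
    (hS : ∀ n, S (e n) = e (n + 1)) (j m : ℕ) :
    ((adjoint S) ^ j) (e m) = if j ≤ m then e (m - j) else 0 := by
  induction j generalizing m with
  | zero => simp
  | succ j ih =>
    rw [pow_succ, ContinuousLinearMap.mul_apply, adjS e S hS]
    rcases Nat.eq_zero_or_pos m with hm | hm
    · simp [hm]
    · rw [if_neg hm.ne', ih]
      by_cases hjm : j + 1 ≤ m
      · rw [if_pos (by omega : j ≤ m - 1), if_pos hjm]
        congr 1
        omega
      · rw [if_neg (by omega : ¬ j ≤ m - 1), if_neg hjm]

private lemma S_pow {H : Type*} [NormedAddCommGroup H] [InnerProductSpace ℂ H]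
    [CompleteSpace H] (e : HilbertBasis ℕ ℂ H) (S : H →L[ℂ] H)
    (hS : ∀ n, S (e n) = e (n + 1)) (j m : ℕ) :
    (S ^ j) (e m) = e (m + j) := by
  induction j with
  | zero => simp
  | succ j ih => rw [pow_succ', ContinuousLinearMap.mul_apply, ih, hS, Nat.add_assoc]

/-- On `ℓ²(ℕ)`, with `S` the unilateral shift and `V = V_a` given by
`V e_n = e_{an}`: if `k` is the smallest nonnegative integer with `a ∣ n + k` and `j ≤ k`,
then `S^j S^{*j} S^{*n} V = S^k S^{*k} S^{*n} V`. -/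
theorem stmt15 {H : Type*} [NormedAddCommGroup H] [InnerProductSpace ℂ H] [CompleteSpace H]
    (e : HilbertBasis ℕ ℂ H) (S : H →L[ℂ] H) (hS : ∀ n, S (e n) = e (n + 1))
    (a : ℕ) (ha : 0 < a) (V : H →L[ℂ] H) (hV : ∀ n, V (e n) = e (a * n))
    (n j k : ℕ) (hk : a ∣ n + k) (hmin : ∀ k', k' < k → ¬ a ∣ n + k') (hj : j ≤ k) :
    S ^ j * (adjoint S) ^ j * (adjoint S) ^ n * V
      = S ^ k * (adjoint S) ^ k * (adjoint S) ^ n * V := by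
  have hdense : Dense ((Submodule.span ℂ (Set.range e) : Submodule ℂ H) : Set H) :=
    Submodule.dense_iff_topologicalClosure_eq_top.mpr e.dense_span
  apply ContinuousLinearMap.ext_on hdense
  rintro _ ⟨m, rfl⟩
  simp only [ContinuousLinearMap.mul_apply, hV]
  rw [adjS_pow e S hS]
  by_cases hnm : n ≤ a * m
  · rw [if_pos hnm]
    set t := a * m - n with ht
    have hkt : k ≤ t := by
      by_contra hlt
      push_neg at hlt
      exact hmin t hlt (by rw [ht]; rw [Nat.add_sub_cancel' hnm]; exact Dvd.intro m rfl)
    have hjt : j ≤ t := hj.trans hkt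
    rw [adjS_pow e S hS, adjS_pow e S hS, if_pos hjt, if_pos hkt,
      S_pow e S hS, S_pow e S hS, Nat.sub_add_cancel hjt, Nat.sub_add_cancel hkt]
  · rw [if_neg hnm]
    simp
end
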